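/- Let q = (q₂, q₃, q₄) range over the open unit ball of ℝ³ (q₂² + q₃² + q₄² < 1), set q₁ = √(1 − q₂² − q₃² − q₄²), and let S(q) be the Euler-parameter kinematics matrix S(q) = 2 · ![![q₁ + q₂²/q₁, q₄ + q₂q₃/q₁, −q₃ + q₂q₄/q₁], ![−q₄ + q₂q₃/q₁, q₁ + q₃²/q₁, q₂ + q₃q₄/q₁], ![q₃ + q₂q₄/q₁, −q₂ + q₃q₄/q₁, q₁ + q₄²/q₁]], with columns S₁(q), S₂(q), S₃(q) (indexed by the coordinates q₂, q₃, q₄). Then for every such q: ∂_{q₃}S₁(q) − ∂_{q₂}S₂(q) = (4/q₁)(−q₃, q₂, q₁)ᵀ, ∂_{q₄}S₁(q) − ∂_{q₂}S₃(q) = (4/q₁)(−q₄, −q₁, q₂)ᵀ, and ∂_{q₄}S₂(q) − ∂_{q₃}S₃(q) = (4/q₁)(q₁, −q₄, q₃)ᵀ. -/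

import Mathlib

open Matrix

noncomputable section

/-- Cross-product matrix `v^×` of `v ∈ ℝ³`, satisfying `crossMat v *ᵥ w = v ×₃ w`. -/
def crossMat (v : Fin 3 → ℝ) : Matrix (Fin 3) (Fin 3) ℝ :=
  !![0, -v 2, v 1; v 2, 0, -v 0; -v 1, v 0, 0]

/-- The 3×3 matrix `[u v w]` with columns `u`, `v`, `w`. -/
def colMat (u v w : Fin 3 → ℝ) : Matrix (Fin 3) (Fin 3) ℝ :=
  Matrix.of fun i j => ![u, v, w] j i

/-- `i`-th partial derivative `∂_{qᵢ} S (q)` of a matrix-valued map at `q`. -/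
def pd (i : Fin 3) (S : (Fin 3 → ℝ) → Matrix (Fin 3) (Fin 3) ℝ) (q : Fin 3 → ℝ) :
    Matrix (Fin 3) (Fin 3) ℝ :=
  Matrix.of fun j k => fderiv ℝ (fun p => S p j k) q (Pi.single i 1)

/-- `i`-th partial derivative of a vector-valued map at `q`. -/
def pdv (i : Fin 3) (f : (Fin 3 → ℝ) → (Fin 3 → ℝ)) (q : Fin 3 → ℝ) : Fin 3 → ℝ :=
  fun j => fderiv ℝ (fun p => f p j) q (Pi.single i 1)

/-- The `j`-th column `Sⱼ(q)` of `S q`. -/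
def colF (S : (Fin 3 → ℝ) → Matrix (Fin 3) (Fin 3) ℝ) (j : Fin 3) (q : Fin 3 → ℝ) :
    Fin 3 → ℝ :=
  fun i => S q i j

/-- `q₁ = √(1 − q₂² − q₃² − q₄²)` for generalized coordinates `r = (q₂, q₃, q₄)`. -/
def ep1 (r : Fin 3 → ℝ) : ℝ := Real.sqrt (1 - r 0 ^ 2 - r 1 ^ 2 - r 2 ^ 2)

/-- The Euler-parameter kinematics matrix `S(q)`. -/
def Seul (r : Fin 3 → ℝ) : Matrix (Fin 3) (Fin 3) ℝ :=
  (2 : ℝ) •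
    !![ep1 r + r 0 ^ 2 / ep1 r, r 2 + r 0 * r 1 / ep1 r, -r 1 + r 0 * r 2 / ep1 r;
       -r 2 + r 0 * r 1 / ep1 r, ep1 r + r 1 ^ 2 / ep1 r, r 0 + r 1 * r 2 / ep1 r;
       r 1 + r 0 * r 2 / ep1 r, -r 0 + r 1 * r 2 / ep1 r, ep1 r + r 2 ^ 2 / ep1 r]

abbrev Pj' (i : Fin 3) : (Fin 3 → ℝ) →L[ℝ] ℝ := ContinuousLinearMap.proj i

lemma hPj' (i : Fin 3) (r : Fin 3 → ℝ) : HasFDerivAt (fun p : Fin 3 → ℝ => p i) (Pj' i) r :=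
  (Pj' i).hasFDerivAt

lemma ep1_hasFDerivAt (r : Fin 3 → ℝ) (h : r 0 ^ 2 + r 1 ^ 2 + r 2 ^ 2 < 1) :
    ∃ E : (Fin 3 → ℝ) →L[ℝ] ℝ, HasFDerivAt ep1 E r ∧
      ∀ i : Fin 3, E (Pi.single i 1) = -(r i) / ep1 r := by
  have hu : 0 < 1 - r 0 ^ 2 - r 1 ^ 2 - r 2 ^ 2 := by linarith
  have hU : HasFDerivAt (fun p : Fin 3 → ℝ => 1 - p 0 ^ 2 - p 1 ^ 2 - p 2 ^ 2)
      ((0 : (Fin 3 → ℝ) →L[ℝ] ℝ)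
        - (r 0 • Pj' 0 + r 0 • Pj' 0) - (r 1 • Pj' 1 + r 1 • Pj' 1)
        - (r 2 • Pj' 2 + r 2 • Pj' 2)) r := by
    have e : (fun p : Fin 3 → ℝ => 1 - p 0 ^ 2 - p 1 ^ 2 - p 2 ^ 2)
        = (fun p : Fin 3 → ℝ => 1 - p 0 * p 0 - p 1 * p 1 - p 2 * p 2) := by
      funext p; ring
    rw [e]
    exact (((hasFDerivAt_const (1:ℝ) r).sub ((hPj' 0 r).mul (hPj' 0 r))).sub
      ((hPj' 1 r).mul (hPj' 1 r))).sub ((hPj' 2 r).mul (hPj' 2 r))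
  have hs := (Real.hasDerivAt_sqrt (ne_of_gt hu)).comp_hasFDerivAt r hU
  refine ⟨_, hs, ?_⟩
  intro i
  fin_cases i <;>
    simp [ep1, Pi.single_apply] <;>
    field_simp <;> ring

lemma gen {A N : (Fin 3 → ℝ) → ℝ} {A' N' E : (Fin 3 → ℝ) →L[ℝ] ℝ} {r : Fin 3 → ℝ}
    (hA : HasFDerivAt A A' r) (hN : HasFDerivAt N N' r) (hE : HasFDerivAt ep1 E r)
    (hq : ep1 r ≠ 0) (v : Fin 3 → ℝ) :
    fderiv ℝ (fun p => 2 * (A p + N p / ep1 p)) r v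
      = 2 * (A' v + (N' v * ep1 r - N r * E v) / ep1 r ^ 2) := by
  have hinv : HasFDerivAt (fun p => (ep1 p)⁻¹)
      ((-ContinuousLinearMap.mulLeftRight ℝ ℝ (ep1 r)⁻¹ (ep1 r)⁻¹).comp E) r :=
    (hasFDerivAt_inv' (𝕜 := ℝ) hq).comp r hE
  have e : (fun p => 2 * (A p + N p / ep1 p)) = (fun p => 2 * (A p + N p * (ep1 p)⁻¹)) := by
    funext p; rw [div_eq_mul_inv]
  rw [e]
  have h : HasFDerivAt (fun p => 2 * (A p + N p * (ep1 p)⁻¹)) _ r :=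
    ((hA.add (hN.mul hinv)).const_mul (2:ℝ))
  rw [h.fderiv]
  simp only [ContinuousLinearMap.smul_apply, ContinuousLinearMap.add_apply,
    ContinuousLinearMap.comp_apply, ContinuousLinearMap.neg_apply,
    ContinuousLinearMap.mulLeftRight_apply, smul_eq_mul, ContinuousLinearMap.coe_smul',
    Pi.smul_apply]
  field_simp
  ring

set_option maxHeartbeats 1000000 in
theorem stmt_15 (r : Fin 3 → ℝ) (h : r 0 ^ 2 + r 1 ^ 2 + r 2 ^ 2 < 1) :
    pdv 1 (colF Seul 0) r - pdv 0 (colF Seul 1) r = (4 / ep1 r) • ![-r 1, r 0, ep1 r] ∧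
    pdv 2 (colF Seul 0) r - pdv 0 (colF Seul 2) r = (4 / ep1 r) • ![-r 2, -ep1 r, r 0] ∧
    pdv 2 (colF Seul 1) r - pdv 1 (colF Seul 2) r = (4 / ep1 r) • ![ep1 r, -r 2, r 1] := by
  have hu : 0 < 1 - r 0 ^ 2 - r 1 ^ 2 - r 2 ^ 2 := by linarith
  have hqpos : 0 < ep1 r := Real.sqrt_pos.2 hu
  have hq : ep1 r ≠ 0 := ne_of_gt hqpos
  obtain ⟨E, hE, hEv⟩ := ep1_hasFDerivAt r h
  -- derivatives of the numerators
  have hN00 : HasFDerivAt (fun p : Fin 3 → ℝ => p 0 ^ 2) (r 0 • Pj' 0 + r 0 • Pj' 0) r := by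
    have e : (fun p : Fin 3 → ℝ => p 0 ^ 2) = (fun p : Fin 3 → ℝ => p 0 * p 0) := by
      funext p; ring
    rw [e]; exact (hPj' 0 r).mul (hPj' 0 r)
  have hN11 : HasFDerivAt (fun p : Fin 3 → ℝ => p 1 ^ 2) (r 1 • Pj' 1 + r 1 • Pj' 1) r := by
    have e : (fun p : Fin 3 → ℝ => p 1 ^ 2) = (fun p : Fin 3 → ℝ => p 1 * p 1) := by
      funext p; ring
    rw [e]; exact (hPj' 1 r).mul (hPj' 1 r)
  have hN22 : HasFDerivAt (fun p : Fin 3 → ℝ => p 2 ^ 2) (r 2 • Pj' 2 + r 2 • Pj' 2) r := by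
    have e : (fun p : Fin 3 → ℝ => p 2 ^ 2) = (fun p : Fin 3 → ℝ => p 2 * p 2) := by
      funext p; ring
    rw [e]; exact (hPj' 2 r).mul (hPj' 2 r)
  have hN01 : HasFDerivAt (fun p : Fin 3 → ℝ => p 0 * p 1) (r 0 • Pj' 1 + r 1 • Pj' 0) r :=
    (hPj' 0 r).mul (hPj' 1 r)
  have hN02 : HasFDerivAt (fun p : Fin 3 → ℝ => p 0 * p 2) (r 0 • Pj' 2 + r 2 • Pj' 0) r :=
    (hPj' 0 r).mul (hPj' 2 r)
  have hN12 : HasFDerivAt (fun p : Fin 3 → ℝ => p 1 * p 2) (r 1 • Pj' 2 + r 2 • Pj' 1) r :=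
    (hPj' 1 r).mul (hPj' 2 r)
  -- entry rewrites
  have eS00 : (fun p => Seul p 0 0) = (fun p => 2 * (ep1 p + p 0 ^ 2 / ep1 p)) := by
    funext p; simp [Seul]
  have eS01 : (fun p => Seul p 0 1) = (fun p => 2 * (p 2 + p 0 * p 1 / ep1 p)) := by
    funext p; simp [Seul]
  have eS02 : (fun p => Seul p 0 2) = (fun p => 2 * (-p 1 + p 0 * p 2 / ep1 p)) := by
    funext p; simp [Seul]
  have eS10 : (fun p => Seul p 1 0) = (fun p => 2 * (-p 2 + p 0 * p 1 / ep1 p)) := by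
    funext p; simp [Seul]
  have eS11 : (fun p => Seul p 1 1) = (fun p => 2 * (ep1 p + p 1 ^ 2 / ep1 p)) := by
    funext p; simp [Seul]
  have eS12 : (fun p => Seul p 1 2) = (fun p => 2 * (p 0 + p 1 * p 2 / ep1 p)) := by
    funext p; simp [Seul]
  have eS20 : (fun p => Seul p 2 0) = (fun p => 2 * (p 1 + p 0 * p 2 / ep1 p)) := by
    funext p; simp [Seul]
  have eS21 : (fun p => Seul p 2 1) = (fun p => 2 * (-p 0 + p 1 * p 2 / ep1 p)) := by
    funext p; simp [Seul]
  have eS22 : (fun p => Seul p 2 2) = (fun p => 2 * (ep1 p + p 2 ^ 2 / ep1 p)) := by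
    funext p; simp [Seul]
  refine ⟨?_, ?_, ?_⟩ <;> funext j <;> fin_cases j <;>
    simp only [Pi.sub_apply, pdv, colF, Fin.isValue, Fin.zero_eta, Fin.mk_one,
      show (⟨2, by omega⟩ : Fin 3) = 2 from rfl] <;>
    [skip; skip; skip; skip; skip; skip; skip; skip; skip]
  · rw [eS00, eS01, gen hE hN00 hE hq, gen (hPj' 2 r) hN01 hE hq]
    simp only [ContinuousLinearMap.add_apply, ContinuousLinearMap.smul_apply,
      ContinuousLinearMap.neg_apply, ContinuousLinearMap.proj_apply, smul_eq_mul, hEv,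
      Pi.single_apply, Matrix.smul_cons, smul_eq_mul, Matrix.smul_empty, Matrix.cons_val_zero,
      Matrix.cons_val_one, Matrix.head_cons, Matrix.cons_val_two, Matrix.tail_cons,
      Pi.smul_apply]
    norm_num [Fin.ext_iff]
    field_simp
    ring
  · rw [eS10, eS11, gen (show HasFDerivAt (fun p : Fin 3 → ℝ => -p 2) (-Pj' 2) r from (hPj' 2 r).neg) hN01 hE hq, gen hE hN11 hE hq]
    simp only [ContinuousLinearMap.add_apply, ContinuousLinearMap.smul_apply,
      ContinuousLinearMap.neg_apply, ContinuousLinearMap.proj_apply, smul_eq_mul, hEv,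
      Pi.single_apply, Matrix.smul_cons, smul_eq_mul, Matrix.smul_empty, Matrix.cons_val_zero,
      Matrix.cons_val_one, Matrix.head_cons, Matrix.cons_val_two, Matrix.tail_cons,
      Pi.smul_apply]
    norm_num [Fin.ext_iff]
    field_simp
    ring
  · rw [eS20, eS21, gen (hPj' 1 r) hN02 hE hq, gen (show HasFDerivAt (fun p : Fin 3 → ℝ => -p 0) (-Pj' 0) r from (hPj' 0 r).neg) hN12 hE hq]
    simp only [ContinuousLinearMap.add_apply, ContinuousLinearMap.smul_apply,
      ContinuousLinearMap.neg_apply, ContinuousLinearMap.proj_apply, smul_eq_mul, hEv,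
      Pi.single_apply, Matrix.smul_cons, smul_eq_mul, Matrix.smul_empty, Matrix.cons_val_zero,
      Matrix.cons_val_one, Matrix.head_cons, Matrix.cons_val_two, Matrix.tail_cons,
      Pi.smul_apply]
    norm_num [Fin.ext_iff]
    field_simp
    ring
  · rw [eS00, eS02, gen hE hN00 hE hq, gen (show HasFDerivAt (fun p : Fin 3 → ℝ => -p 1) (-Pj' 1) r from (hPj' 1 r).neg) hN02 hE hq]
    simp only [ContinuousLinearMap.add_apply, ContinuousLinearMap.smul_apply,
      ContinuousLinearMap.neg_apply, ContinuousLinearMap.proj_apply, smul_eq_mul, hEv,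
      Pi.single_apply, Matrix.smul_cons, smul_eq_mul, Matrix.smul_empty, Matrix.cons_val_zero,
      Matrix.cons_val_one, Matrix.head_cons, Matrix.cons_val_two, Matrix.tail_cons,
      Pi.smul_apply]
    norm_num [Fin.ext_iff]
    field_simp
    ring
  · rw [eS10, eS12, gen (show HasFDerivAt (fun p : Fin 3 → ℝ => -p 2) (-Pj' 2) r from (hPj' 2 r).neg) hN01 hE hq, gen (hPj' 0 r) hN12 hE hq]
    simp only [ContinuousLinearMap.add_apply, ContinuousLinearMap.smul_apply,
      ContinuousLinearMap.neg_apply, ContinuousLinearMap.proj_apply, smul_eq_mul, hEv,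
      Pi.single_apply, Matrix.smul_cons, smul_eq_mul, Matrix.smul_empty, Matrix.cons_val_zero,
      Matrix.cons_val_one, Matrix.head_cons, Matrix.cons_val_two, Matrix.tail_cons,
      Pi.smul_apply]
    norm_num [Fin.ext_iff]
    field_simp
    ring
  · rw [eS20, eS22, gen (hPj' 1 r) hN02 hE hq, gen hE hN22 hE hq]
    simp only [ContinuousLinearMap.add_apply, ContinuousLinearMap.smul_apply,
      ContinuousLinearMap.neg_apply, ContinuousLinearMap.proj_apply, smul_eq_mul, hEv,
      Pi.single_apply, Matrix.smul_cons, smul_eq_mul, Matrix.smul_empty, Matrix.cons_val_zero,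
      Matrix.cons_val_one, Matrix.head_cons, Matrix.cons_val_two, Matrix.tail_cons,
      Pi.smul_apply]
    norm_num [Fin.ext_iff]
    field_simp
    ring
  · rw [eS01, eS02, gen (hPj' 2 r) hN01 hE hq, gen (show HasFDerivAt (fun p : Fin 3 → ℝ => -p 1) (-Pj' 1) r from (hPj' 1 r).neg) hN02 hE hq]
    simp only [ContinuousLinearMap.add_apply, ContinuousLinearMap.smul_apply,
      ContinuousLinearMap.neg_apply, ContinuousLinearMap.proj_apply, smul_eq_mul, hEv,
      Pi.single_apply, Matrix.smul_cons, smul_eq_mul, Matrix.smul_empty, Matrix.cons_val_zero,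
      Matrix.cons_val_one, Matrix.head_cons, Matrix.cons_val_two, Matrix.tail_cons,
      Pi.smul_apply]
    norm_num [Fin.ext_iff]
    field_simp
    ring
  · rw [eS11, eS12, gen hE hN11 hE hq, gen (hPj' 0 r) hN12 hE hq]
    simp only [ContinuousLinearMap.add_apply, ContinuousLinearMap.smul_apply,
      ContinuousLinearMap.neg_apply, ContinuousLinearMap.proj_apply, smul_eq_mul, hEv,
      Pi.single_apply, Matrix.smul_cons, smul_eq_mul, Matrix.smul_empty, Matrix.cons_val_zero,
      Matrix.cons_val_one, Matrix.head_cons, Matrix.cons_val_two, Matrix.tail_cons,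
      Pi.smul_apply]
    norm_num [Fin.ext_iff]
    field_simp
    ring
  · rw [eS21, eS22, gen (show HasFDerivAt (fun p : Fin 3 → ℝ => -p 0) (-Pj' 0) r from (hPj' 0 r).neg) hN12 hE hq, gen hE hN22 hE hq]
    simp only [ContinuousLinearMap.add_apply, ContinuousLinearMap.smul_apply,
      ContinuousLinearMap.neg_apply, ContinuousLinearMap.proj_apply, smul_eq_mul, hEv,
      Pi.single_apply, Matrix.smul_cons, smul_eq_mul, Matrix.smul_empty, Matrix.cons_val_zero,
      Matrix.cons_val_one, Matrix.head_cons, Matrix.cons_val_two, Matrix.tail_cons,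
      Pi.smul_apply]
    norm_num [Fin.ext_iff]
    field_simp
    ring
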